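/- Let X ~ χ²_d (chi-squared with d degrees of freedom). Then for all t > 0, Pr(X ≥ d + 2√(dt) + 2t) ≤ exp(-t). -/

import Mathlib

/-!
Chernoff's method. For `2 l v < 1` the moment generating function of `X²`, `X ~ 𝓝(0, v)`, is
`(1 - 2 l v)^(-1/2)`, so by independence `P(a ≤ Σ Zᵢ²) ≤ exp(-l a - (d/2) log(1 - 2l))` for a
standard Gaussian vector. Writing `s = √d`, `r = √t`, the threshold is `s² + 2sr + 2r²`; the choice
`l = r / (s + 2r)` gives `1 - 2l = 1/y` with `y = 1 + 2r/s`, and `log y ≤ sinh (log y) = (y - 1/y)/2`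
bounds the exponent by exactly `-t`.
-/

open MeasureTheory ProbabilityTheory Real
open scoped NNReal

lemma inv_two_mul_sub_pos {v l : ℝ} (hv : 0 < v) (hl : 2 * l * v < 1) : 0 < (2 * v)⁻¹ - l := by
  have h : (2 * v)⁻¹ - l = (1 - 2 * l * v) / (2 * v) := by field_simp
  rw [h]
  exact div_pos (by linarith) (by positivity)

namespace ProbabilityTheory

variable {Ω : Type*} {mΩ : MeasurableSpace Ω} {μ : Measure Ω} {v : ℝ≥0} {l : ℝ}

lemma gaussianPDFReal_zero_mul_exp_mul_sq (v : ℝ≥0) (l x : ℝ) :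
    gaussianPDFReal 0 v x * exp (l * x ^ 2) =
      (√(2 * π * v))⁻¹ * exp (-((2 * (v : ℝ))⁻¹ - l) * x ^ 2) := by
  rw [gaussianPDFReal, mul_assoc, ← exp_add]
  ring_nf

lemma integrable_exp_mul_sq_gaussianReal (hv : v ≠ 0) (hl : 2 * l * v < 1) :
    Integrable (fun x ↦ exp (l * x ^ 2)) (gaussianReal 0 v) := by
  rw [gaussianReal_of_var_ne_zero 0 hv, integrable_withDensity_iff_integrable_smul'
    (measurable_gaussianPDF 0 v) (ae_of_all _ fun _ ↦ gaussianPDF_lt_top)]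
  simp_rw [gaussianPDF, ENNReal.toReal_ofReal (gaussianPDFReal_nonneg 0 v _), smul_eq_mul,
    gaussianPDFReal_zero_mul_exp_mul_sq]
  exact (integrable_exp_neg_mul_sq (inv_two_mul_sub_pos (by positivity) hl)).const_mul _

lemma integral_exp_mul_sq_gaussianReal (hv : v ≠ 0) (hl : 2 * l * v < 1) :
    ∫ x, exp (l * x ^ 2) ∂gaussianReal 0 v = (√(1 - 2 * l * v))⁻¹ := by
  have hb := inv_two_mul_sub_pos (by positivity) hl
  simp_rw [integral_gaussianReal_eq_integral_smul hv, smul_eq_mul,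
    gaussianPDFReal_zero_mul_exp_mul_sq, integral_const_mul, integral_gaussian]
  rw [← sqrt_inv, ← sqrt_mul (by positivity), ← sqrt_inv]
  congr 1
  field_simp

lemma HasLaw.integrable_exp_mul_sq_of_gaussianReal {X : Ω → ℝ}
    (hX : HasLaw X (gaussianReal 0 v) μ) (hv : v ≠ 0) (hl : 2 * l * v < 1) :
    Integrable (fun ω ↦ exp (l * X ω ^ 2)) μ := by
  have h := integrable_exp_mul_sq_gaussianReal hv hl
  rw [← hX.map_eq] at h
  exact h.comp_aemeasurable hX.aemeasurable

lemma HasLaw.cgf_sq_of_gaussianReal {X : Ω → ℝ}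
    (hX : HasLaw X (gaussianReal 0 v) μ) (hv : v ≠ 0) (hl : 2 * l * v < 1) :
    cgf (fun ω ↦ X ω ^ 2) μ l = -(log (1 - 2 * l * v) / 2) := by
  have hmgf : mgf (fun ω ↦ X ω ^ 2) μ l = (√(1 - 2 * l * v))⁻¹ :=
    (hX.integral_comp (f := fun x ↦ exp (l * x ^ 2)) (by fun_prop)).trans
      (integral_exp_mul_sq_gaussianReal hv hl)
  rw [cgf, hmgf, log_inv, log_sqrt (by linarith)]

lemma iIndepFun.measureReal_sum_sq_ge_le_exp {ι : Type*} [Fintype ι] {Z : ι → Ω → ℝ}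
    (hindep : iIndepFun Z μ) (hZ : ∀ i, HasLaw (Z i) (gaussianReal 0 v) μ) (hv : v ≠ 0)
    (hl₀ : 0 ≤ l) (hl : 2 * l * v < 1) (a : ℝ) :
    μ.real {ω | a ≤ ∑ i, Z i ω ^ 2} ≤
      exp (-l * a - Fintype.card ι * log (1 - 2 * l * v) / 2) := by
  have := hindep.isProbabilityMeasure
  have hsq : iIndepFun (fun i ω ↦ Z i ω ^ 2) μ :=
    hindep.comp (fun _ x ↦ x ^ 2) fun _ ↦ by fun_prop
  have hsq_meas i : AEMeasurable (fun ω ↦ Z i ω ^ 2) μ := (hZ i).aemeasurable.pow_const 2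
  have hint i : Integrable (fun ω ↦ exp (l * Z i ω ^ 2)) μ :=
    (hZ i).integrable_exp_mul_sq_of_gaussianReal hv hl
  have hint_sum : Integrable (fun ω ↦ exp (l * (∑ i, fun ω ↦ Z i ω ^ 2) ω)) μ := by
    rw [← mgf_pos_iff, hsq.mgf_sum₀ hsq_meas]
    exact Finset.prod_pos fun i _ ↦ mgf_pos (hint i)
  have hcgf : cgf (∑ i, fun ω ↦ Z i ω ^ 2) μ l = -(Fintype.card ι * log (1 - 2 * l * v) / 2) := by
    rw [hsq.cgf_sum₀ hsq_meas fun i _ ↦ hint i]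
    simp [(hZ _).cgf_sq_of_gaussianReal hv hl]
    ring
  have h := measure_ge_le_exp_cgf a hl₀ hint_sum
  simp only [hcgf, Finset.sum_apply] at h
  convert h using 2
  ring

end ProbabilityTheory

lemma chiSquared_chernoff_exponent_le {s r : ℝ} (hs : 0 < s) (hr : 0 ≤ r) :
    -(r / (s + 2 * r)) * (s ^ 2 + 2 * s * r + 2 * r ^ 2)
      - s ^ 2 * log (1 - 2 * (r / (s + 2 * r))) / 2 ≤ -r ^ 2 := by
  set y := (s + 2 * r) / s with hy_def
  have hy : 1 ≤ y := by rw [le_div_iff₀ hs]; linarith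
  have hinv : 1 - 2 * (r / (s + 2 * r)) = y⁻¹ := by rw [hy_def]; field_simp; ring
  have hlog : log y ≤ (y - y⁻¹) / 2 :=
    sinh_log (zero_lt_one.trans_le hy) ▸ self_le_sinh_iff.2 (log_nonneg hy)
  have hexact : -(r / (s + 2 * r)) * (s ^ 2 + 2 * s * r + 2 * r ^ 2) + s ^ 2 * ((y - y⁻¹) / 2) / 2
      = -r ^ 2 := by rw [hy_def]; field_simp; ring
  rw [hinv, log_inv]
  linarith [mul_le_mul_of_nonneg_left hlog (sq_nonneg s)]

theorem chi_squared_tail_bound_general (d : ℕ) {Ω : Type*} [MeasureSpace Ω]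
    [IsProbabilityMeasure (ℙ : Measure Ω)] (Z : Fin d → Ω → ℝ)
    (hindep : iIndepFun Z ℙ)
    (hlaw : ∀ i, Measure.map (Z i) ℙ = gaussianReal 0 1)
    (t : ℝ) (ht : 0 < t) :
    ℙ {ω | (d : ℝ) + 2 * Real.sqrt (d * t) + 2 * t ≤ ∑ i, (Z i ω) ^ 2} ≤
      ENNReal.ofReal (Real.exp (-t)) := by
  rcases Nat.eq_zero_or_pos d with rfl | hd
  · have : ¬ 2 * t ≤ 0 := by linarith
    simp [this]
  have hthreshold : (d : ℝ) + 2 * √(d * t) + 2 * t = √d ^ 2 + 2 * √d * √t + 2 * √t ^ 2 := by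
    rw [sqrt_mul (Nat.cast_nonneg d), sq_sqrt (Nat.cast_nonneg d), sq_sqrt ht.le]
    ring
  set s := √(d : ℝ)
  set r := √t
  have hs : 0 < s := sqrt_pos.2 (by exact_mod_cast hd)
  have hr : 0 ≤ r := sqrt_nonneg t
  have hl : 2 * (r / (s + 2 * r)) < 1 := by
    rw [← mul_div_assoc, div_lt_one (by positivity)]
    linarith
  have hgauss i : HasLaw (Z i) (gaussianReal 0 1) ℙ :=
    ⟨.of_map_ne_zero (hlaw i ▸ IsProbabilityMeasure.ne_zero _), hlaw i⟩
  refine (ENNReal.le_ofReal_iff_toReal_le (measure_ne_top _ _) (exp_nonneg _)).2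
    ((hindep.measureReal_sum_sq_ge_le_exp (l := r / (s + 2 * r)) hgauss one_ne_zero
      (by positivity) (by simpa using hl) _).trans ?_)
  rw [exp_le_exp, NNReal.coe_one, mul_one, Fintype.card_fin, hthreshold,
    ← sq_sqrt (Nat.cast_nonneg d), ← sq_sqrt ht.le]
  exact chiSquared_chernoff_exponent_le hs hr

/-- Laurent–Massart upper tail bound for the chi-squared distribution: if
`X = Σ_{i=1}^d Z_i²` with `Z_i` i.i.d. standard normal, then for all `t > 0`,
`Pr(X ≥ d + 2√(dt) + 2t) ≤ exp(-t)`. -/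
theorem chi_squared_tail_bound (d : ℕ) {Ω : Type*} [MeasureSpace Ω]
    [IsProbabilityMeasure (ℙ : Measure Ω)] (Z : Fin d → Ω → ℝ)
    (hmeas : ∀ i, Measurable (Z i))
    (hindep : iIndepFun Z ℙ)
    (hlaw : ∀ i, Measure.map (Z i) ℙ = gaussianReal 0 1)
    (t : ℝ) (ht : 0 < t) :
    ℙ {ω | (d : ℝ) + 2 * Real.sqrt (d * t) + 2 * t ≤ ∑ i, (Z i ω) ^ 2} ≤
      ENNReal.ofReal (Real.exp (-t)) :=
  chi_squared_tail_bound_general d Z hindep hlaw t ht
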